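/- arXiv:2412.06579 — 3 statements merged into one kernel-verified Lean document; each statement's English description precedes it below -/
import Mathlib

section
/- Let F ⊂ ℝ^d be non-empty and compact, and let (F_n) be a sequence of non-empty compact sets converging to F in the Hausdorff metric. Suppose there exist a constant C > 0 and an unbounded sequence of natural numbers (m_n) such that for every n and every integer k with 0 ≤ k ≤ m_n, the number of dyadic cubes of side 2^{−k} meeting F_n is at least C·2^{ks}. Then the lower box dimension of F is at least s. -/
open Filter

/-- The closed dyadic cube in `ℝ^d` of side length `2^{-n}` indexed by `k : Fin d → ℤ`. -/
noncomputable def dyadicCube (d n : ℕ) (k : Fin d → ℤ) : Set (Fin d → ℝ) :=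
  {x | ∀ i, (k i : ℝ) / 2 ^ n ≤ x i ∧ x i ≤ ((k i : ℝ) + 1) / 2 ^ n}

/-- The number of dyadic cubes of side length `2^{-n}` meeting the set `K`. -/
noncomputable def dyadicCount (d n : ℕ) (K : Set (Fin d → ℝ)) : ℕ :=
  Set.ncard {k : Fin d → ℤ | (dyadicCube d n k ∩ K).Nonempty}

/-- The lower box dimension of a bounded set, computed via dyadic covering numbers. -/
noncomputable def lowerBoxDim (d : ℕ) (F : Set (Fin d → ℝ)) : ℝ :=
  Filter.liminf (fun n : ℕ => Real.log (dyadicCount d n F) / ((n : ℝ) * Real.log 2))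
    Filter.atTop

/-!
Once the Hausdorff distance from `F_n` to `F` is below `2^{-k}`, every point of `F_n` lies within
`2^{-k}` of `F`, so every dyadic cube of side `2^{-k}` meeting `F_n` is one of the `3^d` neighbours
of a cube meeting `F`: `N_k(F_n) ≤ 3^d N_k(F)`. Since `m_n` is unbounded, for each `k` some `F_n`
is that close to `F` and has `k ≤ m_n`, whence `N_k(F) ≥ 3^{-d} C 2^{ks}` for every `k`, and taking
logarithms bounds the liminf from below by `s`.
-/

open Topology Bornology Metric

lemma le_liminf_log_div_of_le {u : ℕ → ℝ} {c s : ℝ} (hc : 0 < c)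
    (hu : ∀ᶠ n : ℕ in atTop, c * 2 ^ ((n : ℝ) * s) ≤ u n)
    (hco : IsCoboundedUnder (· ≥ ·) atTop fun n : ℕ => Real.log (u n) / (n * Real.log 2)) :
    s ≤ liminf (fun n : ℕ => Real.log (u n) / (n * Real.log 2)) atTop := by
  have hlog2 : 0 < Real.log 2 := Real.log_pos one_lt_two
  have hlim : Tendsto (fun n : ℕ => s + Real.log c / (n * Real.log 2)) atTop (𝓝 s) := by
    simpa using tendsto_const_nhds.add
      (tendsto_const_nhds.div_atTop (tendsto_natCast_atTop_atTop.atTop_mul_const hlog2))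
  have hle : ∀ᶠ n : ℕ in atTop,
      s + Real.log c / (n * Real.log 2) ≤ Real.log (u n) / (n * Real.log 2) := by
    filter_upwards [hu, eventually_ge_atTop 1] with n hn hn1
    have hden : 0 < (n : ℝ) * Real.log 2 := mul_pos (by exact_mod_cast hn1) hlog2
    have hlog : Real.log c + (n : ℝ) * s * Real.log 2 ≤ Real.log (u n) := by
      have := Real.log_le_log (by positivity) hn
      rwa [Real.log_mul hc.ne' (by positivity), Real.log_rpow two_pos] at this
    rw [le_div_iff₀ hden, add_mul, div_mul_cancel₀ _ hden.ne']
    linarith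
  calc s = liminf (fun n : ℕ => s + Real.log c / (n * Real.log 2)) atTop := hlim.liminf_eq.symm
    _ ≤ _ := liminf_le_liminf hle hlim.isBoundedUnder_ge hco

lemma isCoboundedUnder_ge_log_div_of_le_pow {u : ℕ → ℕ} {A : ℝ} (hA : 1 ≤ A)
    (hu : ∀ᶠ n in atTop, (u n : ℝ) ≤ A ^ n) :
    IsCoboundedUnder (· ≥ ·) atTop fun n : ℕ => Real.log (u n) / (n * Real.log 2) := by
  refine isCoboundedUnder_ge_of_eventually_le atTop (x := Real.log A / Real.log 2) ?_
  filter_upwards [hu, eventually_ge_atTop 1] with n hn hn1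
  have hden : 0 < (n : ℝ) * Real.log 2 := mul_pos (by exact_mod_cast hn1) (Real.log_pos one_lt_two)
  have hlog : Real.log (u n) ≤ n * Real.log A := by
    rcases Nat.eq_zero_or_pos (u n) with h | h
    · simpa [h] using mul_nonneg n.cast_nonneg (Real.log_nonneg hA)
    · rw [← Real.log_pow]
      exact Real.log_le_log (by exact_mod_cast h) hn
  rw [div_le_iff₀ hden]
  calc Real.log (u n) ≤ n * Real.log A := hlog
    _ = Real.log A / Real.log 2 * (n * Real.log 2) := by
        field_simp [(Real.log_pos one_lt_two).ne']

lemma frequently_le_of_forall_exists_le {f : ℕ → ℕ} (hf : ∀ N, ∃ n, N ≤ f n) (N : ℕ) :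
    ∃ᶠ n in atTop, N ≤ f n := by
  rw [Nat.frequently_atTop_iff_infinite]
  intro hfin
  obtain ⟨B, hB⟩ := (hfin.image f).bddAbove
  obtain ⟨n, hn⟩ := hf (max N (B + 1))
  have := hB ⟨n, (le_max_left _ _).trans hn, rfl⟩
  omega

section Dyadic

variable {d n : ℕ}

lemma mem_dyadicCube_iff {k : Fin d → ℤ} {x : Fin d → ℝ} :
    x ∈ dyadicCube d n k ↔ ∀ i, (k i : ℝ) ≤ 2 ^ n * x i ∧ 2 ^ n * x i ≤ k i + 1 := by
  have h : (0 : ℝ) < 2 ^ n := by positivity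
  simp only [dyadicCube, Set.mem_ofPred_eq, div_le_iff₀ h, le_div_iff₀ h, mul_comm]

lemma mem_dyadicCube_floor (x : Fin d → ℝ) : x ∈ dyadicCube d n fun i => ⌊2 ^ n * x i⌋ :=
  mem_dyadicCube_iff.2 fun _ => ⟨Int.floor_le _, (Int.lt_floor_add_one _).le⟩

lemma mem_Icc_floor_of_mem_dyadicCube_of_dist_lt {k : Fin d → ℤ} {x y : Fin d → ℝ}
    (hx : x ∈ dyadicCube d n k) (hxy : dist x y < (2 ^ n)⁻¹) :
    k ∈ Finset.Icc ((fun i => ⌊2 ^ n * y i⌋) - 1) ((fun i => ⌊2 ^ n * y i⌋) + 1) := by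
  simp only [Finset.mem_Icc, Pi.le_def, Pi.sub_apply, Pi.add_apply, Pi.one_apply]
  refine forall_and.1 fun i => ?_
  have hpow : (0 : ℝ) < 2 ^ n := by positivity
  have hclose : |2 ^ n * x i - 2 ^ n * y i| < 1 := by
    calc |2 ^ n * x i - 2 ^ n * y i| = 2 ^ n * dist (x i) (y i) := by
          rw [← mul_sub, abs_mul, abs_of_pos hpow, Real.dist_eq]
      _ < 2 ^ n * (2 ^ n)⁻¹ := by gcongr; exact (dist_le_pi_dist x y i).trans_lt hxy
      _ = 1 := mul_inv_cancel₀ hpow.ne'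
  obtain ⟨hlo, hhi⟩ := mem_dyadicCube_iff.1 hx i
  rw [abs_lt] at hclose
  have h₁ : ⌊2 ^ n * y i⌋ < k i + 2 := Int.floor_lt.2 (by push_cast; linarith)
  have h₂ : k i - 1 ≤ ⌊2 ^ n * y i⌋ := Int.le_floor.2 (by push_cast; linarith)
  omega

lemma card_Icc_sub_one_add_one (k : Fin d → ℤ) : (Finset.Icc (k - 1) (k + 1)).card = 3 ^ d := by
  have h : ∀ i, (k i + 1 + 1 - (k i - 1)).toNat = 3 := fun i => by omega
  simp only [Pi.card_Icc, Pi.sub_apply, Pi.add_apply, Pi.one_apply, Int.card_Icc, h,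
    Finset.prod_const, Finset.card_univ, Fintype.card_fin]

lemma setOf_dyadicCube_inter_nonempty_subset_Icc {K : Set (Fin d → ℝ)} {R : ℝ}
    (hR : K ⊆ closedBall 0 R) :
    {k | (dyadicCube d n k ∩ K).Nonempty} ⊆
      ↑(Finset.Icc (fun _ : Fin d => -(⌊2 ^ n * R⌋₊ : ℤ) - 1) fun _ => (⌊2 ^ n * R⌋₊ : ℤ)) := by
  rintro k ⟨x, hx, hxK⟩
  simp only [Finset.coe_Icc, Set.mem_Icc, Pi.le_def]
  refine forall_and.1 fun i => ?_
  have hxi : |x i| ≤ R :=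
    (norm_le_pi_norm x i).trans (mem_closedBall_zero_iff.1 (hR hxK))
  have hfloor : 2 ^ n * R < ⌊2 ^ n * R⌋₊ + 1 := Nat.lt_floor_add_one _
  obtain ⟨hlo, hhi⟩ := mem_dyadicCube_iff.1 hx i
  rw [abs_le] at hxi
  have hpow : (0 : ℝ) < 2 ^ n := by positivity
  have h₁ : (k i : ℝ) < ⌊2 ^ n * R⌋₊ + 1 := by nlinarith
  have h₂ : -((k i : ℝ) + 1) < ⌊2 ^ n * R⌋₊ + 1 := by nlinarith
  have h₁' : k i < ⌊2 ^ n * R⌋₊ + 1 := by exact_mod_cast h₁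
  have h₂' : -(k i + 1) < ⌊2 ^ n * R⌋₊ + 1 := by exact_mod_cast h₂
  omega

lemma finite_setOf_dyadicCube_inter_nonempty {K : Set (Fin d → ℝ)} (hK : IsBounded K) :
    {k | (dyadicCube d n k ∩ K).Nonempty}.Finite := by
  obtain ⟨R, hR⟩ := hK.subset_closedBall 0
  exact (Finset.finite_toSet _).subset (setOf_dyadicCube_inter_nonempty_subset_Icc hR)

lemma dyadicCount_le_of_subset_closedBall {K : Set (Fin d → ℝ)} {R : ℝ} (hR0 : 0 ≤ R)
    (hR : K ⊆ closedBall 0 R) : (dyadicCount d n K : ℝ) ≤ (2 ^ n * (2 * R + 2)) ^ d := by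
  set N := ⌊(2 : ℝ) ^ n * R⌋₊
  have hcard : dyadicCount d n K ≤ (2 * N + 2) ^ d := by
    have h : ((N : ℤ) + 1 - (-(N : ℤ) - 1)).toNat = 2 * N + 2 := by omega
    calc dyadicCount d n K ≤ (Finset.Icc (fun _ : Fin d => -(N : ℤ) - 1) fun _ => (N : ℤ)).card := by
          rw [dyadicCount, ← Set.ncard_coe_finset]
          exact Set.ncard_le_ncard (setOf_dyadicCube_inter_nonempty_subset_Icc hR)
            (Finset.finite_toSet _)
      _ = (2 * N + 2) ^ d := by
          simp only [Pi.card_Icc, Int.card_Icc, h, Finset.prod_const, Finset.card_univ,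
            Fintype.card_fin]
  have hN : (2 * N + 2 : ℝ) ≤ 2 ^ n * (2 * R + 2) := by
    have := Nat.floor_le (by positivity : (0 : ℝ) ≤ 2 ^ n * R)
    nlinarith [one_le_pow₀ (one_le_two : (1 : ℝ) ≤ 2) (n := n)]
  calc (dyadicCount d n K : ℝ) ≤ ((2 * N + 2 : ℕ) : ℝ) ^ d := by exact_mod_cast hcard
    _ ≤ (2 ^ n * (2 * R + 2)) ^ d := by push_cast; gcongr

lemma dyadicCount_le_three_pow_mul {K F : Set (Fin d → ℝ)} (hF : IsBounded F)
    (hKF : hausdorffEDist K F ≠ ⊤) (hdist : hausdorffDist K F < (2 ^ n)⁻¹) :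
    dyadicCount d n K ≤ 3 ^ d * dyadicCount d n F := by
  classical
  set hitsF := (finite_setOf_dyadicCube_inter_nonempty (n := n) hF).toFinset
  have hsub : {k | (dyadicCube d n k ∩ K).Nonempty} ⊆
      hitsF.biUnion fun k' => Finset.Icc (k' - 1) (k' + 1) := by
    rintro k ⟨x, hx, hxK⟩
    obtain ⟨y, hyF, hxy⟩ := exists_dist_lt_of_hausdorffDist_lt hxK hdist hKF
    simp only [Finset.coe_biUnion, Set.mem_iUnion, Finset.mem_coe, exists_prop]
    exact ⟨_, (Set.Finite.mem_toFinset _).2 ⟨y, mem_dyadicCube_floor y, hyF⟩,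
      mem_Icc_floor_of_mem_dyadicCube_of_dist_lt hx hxy⟩
  calc dyadicCount d n K
      ≤ (hitsF.biUnion fun k' => Finset.Icc (k' - 1) (k' + 1)).card := by
        rw [dyadicCount, ← Set.ncard_coe_finset]
        exact Set.ncard_le_ncard hsub (Finset.finite_toSet _)
    _ ≤ hitsF.card * 3 ^ d :=
        Finset.card_biUnion_le_card_mul _ _ _ fun k' _ => (card_Icc_sub_one_add_one k').le
    _ = 3 ^ d * dyadicCount d n F := by
        rw [dyadicCount, Set.ncard_eq_toFinset_card _ (finite_setOf_dyadicCube_inter_nonempty hF),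
          mul_comm]


lemma isCoboundedUnder_ge_log_dyadicCount {K : Set (Fin d → ℝ)} (hK : IsBounded K) :
    IsCoboundedUnder (· ≥ ·) atTop
      fun n : ℕ => Real.log (dyadicCount d n K) / (n * Real.log 2) := by
  obtain ⟨R, hR0, hR⟩ := hK.subset_closedBall_lt 0 0
  have hM : 1 ≤ 2 * R + 2 := by linarith
  refine isCoboundedUnder_ge_log_div_of_le_pow (A := (2 * (2 * R + 2)) ^ d)
    (one_le_pow₀ (by linarith)) ?_
  filter_upwards [eventually_ge_atTop 1] with n hn
  calc (dyadicCount d n K : ℝ) ≤ (2 ^ n * (2 * R + 2)) ^ d :=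
        dyadicCount_le_of_subset_closedBall hR0.le hR
    _ ≤ ((2 * (2 * R + 2)) ^ n) ^ d := by
        gcongr ?_ ^ d
        rw [mul_pow]
        gcongr
        exact le_self_pow₀ hM (by omega)
    _ = ((2 * (2 * R + 2)) ^ d) ^ n := by rw [← pow_mul, ← pow_mul, Nat.mul_comm]

end Dyadic

theorem stmt2 (d : ℕ) (F : Set (Fin d → ℝ)) (hF : IsCompact F) (hFne : F.Nonempty)
    (Fn : ℕ → Set (Fin d → ℝ)) (hFnc : ∀ n, IsCompact (Fn n)) (hFnne : ∀ n, (Fn n).Nonempty)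
    (hconv : Tendsto (fun n => Metric.hausdorffDist (Fn n) F) atTop (nhds 0))
    (s : ℝ) (C : ℝ) (hC : 0 < C) (mn : ℕ → ℕ) (hmn : ∀ N : ℕ, ∃ n, N ≤ mn n)
    (hcount : ∀ n, ∀ j : ℕ, j ≤ mn n →
      C * (2 : ℝ) ^ ((j : ℝ) * s) ≤ (dyadicCount d j (Fn n) : ℝ)) :
    s ≤ lowerBoxDim d F := by
  have hlower : ∀ k : ℕ, C / 3 ^ d * 2 ^ ((k : ℝ) * s) ≤ dyadicCount d k F := by
    intro k
    have hclose : ∀ᶠ n in atTop, hausdorffDist (Fn n) F < ((2 : ℝ) ^ k)⁻¹ :=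
      hconv.eventually (gt_mem_nhds (by positivity))
    obtain ⟨n, hn, hkn⟩ := (hclose.and_frequently (frequently_le_of_forall_exists_le hmn k)).exists
    have hcomp := dyadicCount_le_three_pow_mul hF.isBounded
      (hausdorffEDist_ne_top_of_nonempty_of_bounded (hFnne n) hFne (hFnc n).isBounded
        hF.isBounded) hn
    rw [div_mul_eq_mul_div, div_le_iff₀ (by positivity)]
    calc C * 2 ^ ((k : ℝ) * s) ≤ dyadicCount d k (Fn n) := hcount n k hkn
      _ ≤ 3 ^ d * dyadicCount d k F := by exact_mod_cast hcomp
      _ = _ := mul_comm _ _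
  exact le_liminf_log_div_of_le (by positivity) (.of_forall hlower)
    (isCoboundedUnder_ge_log_dyadicCount hF.isBounded)
end

section
/- Let E be a subset of a line Y through the origin in ℝ² and let B ⊂ ℝ². If E is contained in the ε-neighbourhood of B (one-sided Hausdorff distance p_H(E;B) < ε), then for any invertible 2×2 matrix A, the set ‖A|Y‖·E_{AY} (the similar copy of E scaled by ‖A|Y‖ placed on the line AY) is contained in the (‖A‖ε)-neighbourhood of A(B), assuming A maps the unit direction of Y to the positive multiple of the unit direction of AY. -/
/-! On `Y` the map `x ↦ c ⟪x, e_Y⟫ e_{AY}` coincides with `A`, since `⟪x, e_Y⟫ e_Y = x` there;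
and `A`, being `‖A‖`-Lipschitz, maps the `ε`-neighbourhood of `B` into the
`‖A‖ε`-neighbourhood of `A(B)`. -/

/-- `E2` is the Euclidean plane. -/
abbrev E2 := EuclideanSpace ℝ (Fin 2)

open Metric Submodule
open scoped NNReal

theorem inner_smul_eq_self_of_mem_span_unit (𝕜 : Type*) {F : Type*} [RCLike 𝕜]
    [NormedAddCommGroup F] [InnerProductSpace 𝕜 F] {v w : F} (hv : ‖v‖ = 1) (hw : w ∈ 𝕜 ∙ v) :
    inner 𝕜 v w • v = w := by
  rw [← starProjection_unit_singleton 𝕜 hv, starProjection_eq_self_iff.mpr hw]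

theorem LipschitzWith.image_thickening_subset {α β : Type*} [PseudoMetricSpace α]
    [PseudoMetricSpace β] {f : α → β} {K : ℝ≥0} (hf : LipschitzWith K f) (hK : 0 < K)
    (δ : ℝ) (s : Set α) : f '' thickening δ s ⊆ thickening (K * δ) (f '' s) := by
  rintro _ ⟨x, hx, rfl⟩
  obtain ⟨y, hy, hxy⟩ := mem_thickening_iff.mp hx
  exact mem_thickening_iff.mpr ⟨f y, Set.mem_image_of_mem f hy,
    (hf.dist_le_mul x y).trans_lt (mul_lt_mul_of_pos_left hxy hK)⟩

theorem stmt9_general (Y : Submodule ℝ E2) (hY : Module.finrank ℝ Y = 1)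
    (E B : Set E2) (hEY : E ⊆ (Y : Set E2))
    (ε : ℝ)
    -- `p_H(E;B) < ε`, i.e. `E` is contained in the `ε`-neighbourhood of `B`
    (hEB : E ⊆ Metric.thickening ε B)
    (A : E2 →L[ℝ] E2)
    -- `e_Y` is the chosen unit vector of `Y`, `e_{AY}` the chosen unit vector of `AY`,
    -- and `A` maps `e_Y` to a positive multiple `c = ‖A|Y‖` of `e_{AY}`
    (eY eAY : E2) (heY : eY ∈ Y) (heY1 : ‖eY‖ = 1) (heAY1 : ‖eAY‖ = 1)
    (c : ℝ) (hc : 0 < c) (hAc : A eY = c • eAY) :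
    -- the set `‖A|Y‖ • E_{AY}` is contained in the `(‖A‖ε)`-neighbourhood of `A(B)`
    {p : E2 | ∃ x ∈ E, p = (c * (inner ℝ x eY : ℝ)) • eAY} ⊆
      Metric.thickening (‖A‖ * ε) (A '' B) := by
  rintro p ⟨x, hxE, rfl⟩
  have hY_eq : Y = ℝ ∙ eY :=
    eq_span_singleton_of_mem_of_finrank_eq_one hY heY (norm_ne_zero_iff.mp (by simp [heY1]))
  have hx : x ∈ ℝ ∙ eY := hY_eq ▸ hEY hxE
  have hAx : (c * inner ℝ x eY) • eAY = A x := by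
    rw [mul_comm, mul_smul, ← hAc, ← map_smul, real_inner_comm,
      inner_smul_eq_self_of_mem_span_unit ℝ heY1 hx]
  have hA_pos : 0 < ‖A‖₊ := by
    have hAeY : ‖A eY‖ = c := by rw [hAc, norm_smul, heAY1, mul_one, Real.norm_of_nonneg hc.le]
    refine nnnorm_pos.mpr fun hA0 => hc.ne' ?_
    simp [← hAeY, hA0]
  rw [hAx]
  exact A.lipschitz.image_thickening_subset hA_pos ε B ⟨x, hEB hxE, rfl⟩

theorem stmt9 (Y : Submodule ℝ E2) (hY : Module.finrank ℝ Y = 1)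
    (E B : Set E2) (hEY : E ⊆ (Y : Set E2))
    (ε : ℝ) (hε : 0 < ε)
    -- `p_H(E;B) < ε`, i.e. `E` is contained in the `ε`-neighbourhood of `B`
    (hEB : E ⊆ Metric.thickening ε B)
    (A : E2 →L[ℝ] E2) (hA : Function.Bijective A)
    -- `e_Y` is the chosen unit vector of `Y`, `e_{AY}` the chosen unit vector of `AY`,
    -- and `A` maps `e_Y` to a positive multiple `c = ‖A|Y‖` of `e_{AY}`
    (eY eAY : E2) (heY : eY ∈ Y) (heY1 : ‖eY‖ = 1) (heAY1 : ‖eAY‖ = 1)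
    (c : ℝ) (hc : 0 < c) (hAc : A eY = c • eAY) :
    -- the set `‖A|Y‖ • E_{AY}` is contained in the `(‖A‖ε)`-neighbourhood of `A(B)`
    {p : E2 | ∃ x ∈ E, p = (c * (inner ℝ x eY : ℝ)) • eAY} ⊆
      Metric.thickening (‖A‖ * ε) (A '' B) :=
  stmt9_general Y hY E B hEY ε hEB A eY eAY heY heY1 heAY1 c hc hAc
end

section
/- Let K ⊂ ℝ^d be a non-empty compact set and let E be a coarse microset of K, i.e., there are expansion ratios λ_n ≥ 1, points x_n ∈ K, and a bi-Lipschitz map f: ℝ^d → ℝ^d with p_H(f(E); λ_n(K − x_n)) → 0. Then the Assouad dimension of K is at least the Assouad dimension of E. -/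
open Filter

/-- The smallest number of open balls of radius `r` needed to cover `E`. -/
noncomputable def coverNum {α : Type*} [PseudoMetricSpace α] (r : ℝ) (E : Set α) : ℕ :=
  sInf {n : ℕ | ∃ S : Finset α, S.card = n ∧ E ⊆ ⋃ x ∈ S, Metric.ball x r}

/-- The Assouad dimension of a bounded set. -/
noncomputable def assouadDim {α : Type*} [PseudoMetricSpace α] (F : Set α) : ℝ :=
  sInf {s : ℝ | 0 ≤ s ∧ ∃ C : ℝ, 0 < C ∧ ∀ x ∈ F, ∀ r R : ℝ, 0 < r → r ≤ R → R ≤ 1 →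
    (coverNum r (F ∩ Metric.ball x R) : ℝ) ≤ C * (R / r) ^ s}

/-! If `f(E)` lies within `δₙ` of `λₙ(K - xₙ)` with `δₙ → 0`, then `f` carries a ball of radius `R`
in `E` close to the blow-up of a ball of radius about `R / λₙ` in `K`. Choosing `n` with `δₙ` small
compared to the fine scale `r`, an `r / λₙ`-cover of that ball of `K` pulls back to an `r`-cover of
the ball of `E`; the ratio of scales changes only by the bi-Lipschitz constants, so every Assouad
exponent of `K` is one of `E`. The radius `R / λₙ` may exceed `1`, which compactness of `K` handles.
Since `assouadDim` is an infimum, it matters that `K ⊆ ℝᵈ` has some exponent: `d` works, by a volume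
count of separated points. -/

open Metric MeasureTheory Module
open scoped NNReal ENNReal Topology

section CoverNum

variable {α : Type*} [PseudoMetricSpace α] {r : ℝ} {A : Set α}

lemma coverNum_le_card (S : Finset α) (h : A ⊆ ⋃ x ∈ S, ball x r) : coverNum r A ≤ S.card :=
  Nat.sInf_le ⟨S, rfl, h⟩

lemma exists_card_eq_coverNum (h : ∃ S : Finset α, A ⊆ ⋃ x ∈ S, ball x r) :
    ∃ S : Finset α, S.card = coverNum r A ∧ A ⊆ ⋃ x ∈ S, ball x r :=
  let ⟨S, hS⟩ := h
  Nat.sInf_mem (s := {n | ∃ S : Finset α, S.card = n ∧ A ⊆ ⋃ x ∈ S, ball x r}) ⟨S.card, S, rfl, hS⟩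

lemma IsCompact.exists_finset_subset_iUnion_ball (hA : IsCompact A) (hr : 0 < r) :
    ∃ S : Finset α, ↑S ⊆ A ∧ A ⊆ ⋃ x ∈ S, ball x r := by
  obtain ⟨t, htA, ht, hcover⟩ := finite_cover_balls_of_compact hA hr
  exact ⟨ht.toFinset, by simpa using htA, by simpa using hcover⟩

lemma coverNum_le_sum_of_subset_biUnion {ι : Type*} (T : Finset ι) {B : ι → Set α}
    (hA : A ⊆ ⋃ i ∈ T, B i) (hB : ∀ i ∈ T, ∃ S : Finset α, B i ⊆ ⋃ x ∈ S, ball x r) :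
    coverNum r A ≤ ∑ i ∈ T, coverNum r (B i) := by
  classical
  have hS : ∀ i, ∃ S : Finset α, i ∈ T → S.card = coverNum r (B i) ∧ B i ⊆ ⋃ x ∈ S, ball x r :=
    fun i => if hi : i ∈ T then (exists_card_eq_coverNum (hB i hi)).imp fun _ h _ => h
      else ⟨∅, fun h => absurd h hi⟩
  choose S hS using hS
  calc coverNum r A ≤ (T.biUnion S).card := by
        refine coverNum_le_card _ fun a ha => ?_
        obtain ⟨i, hi, hai⟩ := Set.mem_iUnion₂.1 (hA ha)
        obtain ⟨x, hx, hax⟩ := Set.mem_iUnion₂.1 ((hS i hi).2 hai)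
        exact Set.mem_iUnion₂.2 ⟨x, Finset.mem_biUnion.2 ⟨i, hi, hx⟩, hax⟩
    _ ≤ ∑ i ∈ T, (S i).card := Finset.card_biUnion_le
    _ = ∑ i ∈ T, coverNum r (B i) := Finset.sum_congr rfl fun i hi => (hS i hi).1

/-- An `r`-separated subset of `A` of maximal size is an `r`-net of `A`. -/
lemma coverNum_le_of_forall_card_le (hr : 0 < r) {N : ℕ}
    (hN : ∀ S : Finset α, ↑S ⊆ A → (S : Set α).Pairwise (fun p q => r ≤ dist p q) → S.card ≤ N) :
    coverNum r A ≤ N := by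
  classical
  let P : Finset α → Prop := fun S => ↑S ⊆ A ∧ (S : Set α).Pairwise (fun p q => r ≤ dist p q)
  obtain ⟨S, ⟨hSA, hSsep⟩, hScard⟩ := Nat.findGreatest_spec (P := fun n => ∃ S, P S ∧ S.card = n)
    (Nat.zero_le N) ⟨∅, by simp [P], rfl⟩
  have hmax : ∀ T, P T → T.card ≤ S.card := fun T hT =>
    hScard ▸ Nat.le_findGreatest (hN T hT.1 hT.2) ⟨T, hT, rfl⟩
  refine (coverNum_le_card S fun a ha => ?_).trans (hScard ▸ Nat.findGreatest_le N)
  by_contra hcover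
  simp only [Set.mem_iUnion, mem_ball, not_exists, not_lt] at hcover
  have haS : a ∉ S := fun h => (dist_self a ▸ hcover a h).not_gt hr
  have hinsert : P (insert a S) := by
    refine ⟨by simpa [Set.insert_subset_iff] using ⟨ha, hSA⟩, ?_⟩
    rw [Finset.coe_insert, Set.pairwise_insert]
    exact ⟨hSsep, fun b hb _ => ⟨hcover b hb, dist_comm a b ▸ hcover b hb⟩⟩
  have := hmax _ hinsert
  rw [Finset.card_insert_of_notMem haS] at this
  omega

end CoverNum

/-- Each ball of a `ρ`-cover of `B` is pulled back, through one point of `A` near its image, to a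
ball of radius `r` around that point. -/
lemma coverNum_le_of_image_subset_thickening {X Y Z : Type*} [PseudoMetricSpace X]
    [PseudoMetricSpace Y] [PseudoMetricSpace Z] {h : X → Y} {g : Z → Y} {K : ℝ≥0} {c ρ η r : ℝ}
    {A : Set X} {B : Set Z} (hh : AntilipschitzWith K h)
    (hg : ∀ u v, dist (g u) (g v) ≤ c * dist u v) (hc : 0 ≤ c)
    (hB : ∃ S : Finset Z, B ⊆ ⋃ y ∈ S, ball y ρ) (hAB : h '' A ⊆ thickening η (g '' B))
    (hr : 2 * K * (c * ρ + η) < r) :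
    coverNum r A ≤ coverNum ρ B := by
  classical
  rcases A.eq_empty_or_nonempty with rfl | ⟨a₀, ha₀⟩
  · exact (coverNum_le_card ∅ (Set.empty_subset _)).trans (Nat.zero_le _)
  obtain ⟨S, hScard, hScover⟩ := exists_card_eq_coverNum hB
  have hφ : ∀ y, ∃ a, (∃ a' ∈ A, dist (h a') (g y) < c * ρ + η) →
      a ∈ A ∧ dist (h a) (g y) < c * ρ + η := fun y =>
    if hy : ∃ a' ∈ A, dist (h a') (g y) < c * ρ + η then ⟨hy.choose, fun _ => hy.choose_spec⟩
    else ⟨a₀, fun h => absurd h hy⟩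
  choose φ hφ using hφ
  calc coverNum r A ≤ (S.image φ).card := by
        refine coverNum_le_card _ fun a ha => ?_
        obtain ⟨_, ⟨b, hb, rfl⟩, hab⟩ := mem_thickening_iff.1 (hAB ⟨a, ha, rfl⟩)
        obtain ⟨y, hy, hby⟩ := Set.mem_iUnion₂.1 (hScover hb)
        have hay : dist (h a) (g y) < c * ρ + η := calc
          dist (h a) (g y) ≤ dist (h a) (g b) + dist (g b) (g y) := dist_triangle _ _ _
          _ < η + c * ρ := add_lt_add_of_lt_of_le hab
            ((hg b y).trans (mul_le_mul_of_nonneg_left (mem_ball.1 hby).le hc))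
          _ = c * ρ + η := add_comm _ _
        obtain ⟨-, hφy⟩ := hφ y ⟨a, ha, hay⟩
        refine Set.mem_iUnion₂.2 ⟨φ y, Finset.mem_image_of_mem φ hy, mem_ball.2 ?_⟩
        calc dist a (φ y) ≤ K * dist (h a) (h (φ y)) := hh.le_mul_dist a (φ y)
          _ ≤ K * (2 * (c * ρ + η)) := by
            gcongr
            linarith [dist_triangle_right (h a) (h (φ y)) (g y)]
          _ < r := by linarith
    _ ≤ S.card := Finset.card_image_le
    _ = coverNum ρ B := hScard

section FiniteDimensional

variable {E : Type*} [NormedAddCommGroup E] [NormedSpace ℝ E] [FiniteDimensional ℝ E]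

/-- The disjoint balls of radius `r / 2` around the points of `S` lie in a ball of radius
`3 * R / 2`; compare volumes. -/
lemma card_le_of_pairwise_le_dist {S : Finset E} {x : E} {r R : ℝ} (hr : 0 < r) (hrR : r ≤ R)
    (hS : ↑S ⊆ ball x R) (hsep : (S : Set E).Pairwise (fun p q => r ≤ dist p q)) :
    (S.card : ℝ) ≤ (3 * R / r) ^ finrank ℝ E := by
  have hR : 0 < R := hr.trans_le hrR
  borelize E
  let μ : Measure E := Measure.addHaar
  have hdisj : (S : Set E).PairwiseDisjoint (fun p => ball p (r / 2)) := fun p hp q hq hpq =>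
    ball_disjoint_ball (by rw [add_halves]; exact hsep hp hq hpq)
  have hsub : ⋃ p ∈ S, ball p (r / 2) ⊆ ball x (3 * R / 2) :=
    Set.iUnion₂_subset fun p hp => ball_subset_ball' (by linarith [mem_ball.1 (hS hp)])
  have hvol : (S.card : ℝ≥0∞) * ENNReal.ofReal ((r / 2) ^ finrank ℝ E) * μ (ball 0 1) ≤
      ENNReal.ofReal ((3 * R / 2) ^ finrank ℝ E) * μ (ball 0 1) := calc
    _ = μ (⋃ p ∈ S, ball p (r / 2)) := by
      rw [measure_biUnion_finset hdisj fun p _ => measurableSet_ball]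
      simp only [μ.addHaar_ball_of_pos _ (half_pos hr), Finset.sum_const, nsmul_eq_mul, mul_assoc]
    _ ≤ μ (ball x (3 * R / 2)) := measure_mono hsub
    _ = _ := μ.addHaar_ball_of_pos _ (by positivity)
  have hvol' := (ENNReal.mul_le_mul_iff_left (measure_ball_pos μ _ one_pos).ne'
    measure_ball_lt_top.ne).1 hvol
  rw [← ENNReal.ofReal_natCast, ← ENNReal.ofReal_mul (by positivity),
    ENNReal.ofReal_le_ofReal_iff (by positivity)] at hvol'
  calc (S.card : ℝ) ≤ (3 * R / 2) ^ finrank ℝ E / (r / 2) ^ finrank ℝ E :=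
        (le_div_iff₀ (by positivity)).2 hvol'
    _ = (3 * R / r) ^ finrank ℝ E := by rw [← div_pow]; congr 1; field_simp

lemma coverNum_inter_ball_le (A : Set E) (x : E) {r R : ℝ} (hr : 0 < r) (hrR : r ≤ R) :
    (coverNum r (A ∩ ball x R) : ℝ) ≤ (3 * R / r) ^ finrank ℝ E := by
  refine (Nat.cast_le.2 (coverNum_le_of_forall_card_le hr fun S hS hsep =>
    Nat.le_floor (card_le_of_pairwise_le_dist hr hrR (hS.trans Set.inter_subset_right) hsep))).trans
    (Nat.floor_le (pow_nonneg (div_nonneg (by linarith) hr.le) _))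

end FiniteDimensional

def HasAssouadBound {α : Type*} [PseudoMetricSpace α] (F : Set α) (s : ℝ) : Prop :=
  ∃ C : ℝ, 0 < C ∧ ∀ x ∈ F, ∀ r R : ℝ, 0 < r → r ≤ R → R ≤ 1 →
    (coverNum r (F ∩ ball x R) : ℝ) ≤ C * (R / r) ^ s

lemma hasAssouadBound_finrank {E : Type*} [NormedAddCommGroup E] [NormedSpace ℝ E]
    [FiniteDimensional ℝ E] (A : Set E) : HasAssouadBound A (finrank ℝ E) := by
  refine ⟨3 ^ finrank ℝ E, by positivity, fun x _ r R hr hrR _ => ?_⟩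
  rw [Real.rpow_natCast, ← mul_pow, ← mul_div_assoc]
  exact coverNum_inter_ball_le A x hr hrR

lemma assouadDim_le_of_forall_hasAssouadBound {α : Type*} [PseudoMetricSpace α] {F G : Set α}
    {s₀ : ℝ} (hs₀ : 0 ≤ s₀) (hG : HasAssouadBound G s₀)
    (h : ∀ s, 0 ≤ s → HasAssouadBound G s → HasAssouadBound F s) :
    assouadDim F ≤ assouadDim G :=
  csInf_le_csInf ⟨0, fun _ hs => hs.1⟩ ⟨s₀, hs₀, hG⟩ fun s hs => ⟨hs.1, h s hs.1 hs.2⟩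

section Microset

variable {X Y : Type*} [PseudoMetricSpace X] [PseudoMetricSpace Y]

/-- For `R > 1`, `F ∩ ball x R` is covered by a fixed finite family of unit balls centred in `F`. -/
lemma HasAssouadBound.exists_coverNum_le {F : Set Y} {s : ℝ} (hF : IsCompact F)
    (h : HasAssouadBound F s) (hs : 0 ≤ s) :
    ∃ C : ℝ, 0 < C ∧ ∀ x ∈ F, ∀ r R : ℝ, 0 < r → r ≤ R → r ≤ 1 →
      (coverNum r (F ∩ ball x R) : ℝ) ≤ C * (R / r) ^ s := by
  obtain ⟨C, hC, hCF⟩ := h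
  obtain ⟨T, hTF, hFT⟩ := hF.exists_finset_subset_iUnion_ball one_pos
  refine ⟨C * (T.card + 1), by positivity, fun x hx r R hr hrR hr1 => ?_⟩
  have hRr : 0 ≤ (R / r) ^ s := Real.rpow_nonneg (div_nonneg (hr.le.trans hrR) hr.le) s
  rcases le_or_gt R 1 with hR1 | hR1
  · calc (coverNum r (F ∩ ball x R) : ℝ) ≤ C * (R / r) ^ s := hCF x hx r R hr hrR hR1
      _ ≤ C * (T.card + 1) * (R / r) ^ s := by
        gcongr; exact le_mul_of_one_le_right hC.le (by linarith [T.card.cast_nonneg (α := ℝ)])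
  have hsum := coverNum_le_sum_of_subset_biUnion (r := r) (A := F ∩ ball x R) T
    (B := fun y => F ∩ ball y 1) (fun a ha => by
      obtain ⟨y, hy, hay⟩ := Set.mem_iUnion₂.1 (hFT ha.1)
      exact Set.mem_iUnion₂.2 ⟨y, hy, ha.1, hay⟩)
    fun y _ => (hF.exists_finset_subset_iUnion_ball hr).imp fun _ h =>
      Set.inter_subset_left.trans h.2
  calc (coverNum r (F ∩ ball x R) : ℝ) ≤ ∑ y ∈ T, (coverNum r (F ∩ ball y 1) : ℝ) := by
        exact_mod_cast hsum
    _ ≤ ∑ y ∈ T, C * (R / r) ^ s := Finset.sum_le_sum fun y hy =>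
        (hCF y (hTF hy) r 1 hr hr1 le_rfl).trans (by gcongr)
    _ = T.card * (C * (R / r) ^ s) := by rw [Finset.sum_const, nsmul_eq_mul]
    _ ≤ C * (T.card + 1) * (R / r) ^ s := by linarith [mul_nonneg hC.le hRr]

lemma image_inter_ball_subset_thickening {Z : Type*} [PseudoMetricSpace Z] {E : Set X} {K : Set Z}
    {f : X → Y} {g : Z → Y} {L : ℝ≥0} {c δ R R' : ℝ} (hf : LipschitzWith L f)
    (hg : ∀ u v, dist (g u) (g v) = c * dist u v) (hc : 0 ≤ c)
    (hEK : f '' E ⊆ thickening δ (g '' K)) {z : X} {k₀ : Z} (hzk₀ : dist (f z) (g k₀) < δ)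
    (hR' : L * R + 2 * δ ≤ c * R') :
    f '' (E ∩ ball z R) ⊆ thickening δ (g '' (K ∩ ball k₀ R')) := by
  rintro _ ⟨p, ⟨hp, hpz⟩, rfl⟩
  obtain ⟨_, ⟨k, hk, rfl⟩, hpk⟩ := mem_thickening_iff.1 (hEK ⟨p, hp, rfl⟩)
  refine mem_thickening_iff.2 ⟨g k, ⟨k, ⟨hk, mem_ball.2 ?_⟩, rfl⟩, hpk⟩
  refine lt_of_mul_lt_mul_left ?_ hc
  calc c * dist k k₀ = dist (g k) (g k₀) := (hg k k₀).symm
    _ ≤ dist (g k) (f p) + dist (f p) (f z) + dist (f z) (g k₀) := dist_triangle4 _ _ _ _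
    _ < δ + L * R + δ := by
      have hpz' : dist (f p) (f z) ≤ L * R :=
        (hf.dist_le_mul p z).trans (mul_le_mul_of_nonneg_left (mem_ball.1 hpz).le L.2)
      rw [dist_comm] at hpk
      linarith
    _ ≤ c * R' := by linarith

lemma HasAssouadBound.of_image_subset_thickening {E : Set X} {K : Set Y} {s : ℝ}
    (hK : IsCompact K) (hKs : HasAssouadBound K s) (hs : 0 ≤ s) {f : X → Y} {Lf Kf : ℝ≥0}
    (hlip : LipschitzWith Lf f) (hanti : AntilipschitzWith Kf f) {g : ℕ → Y → Y} {lam : ℕ → ℝ}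
    (hg : ∀ n u v, dist (g n u) (g n v) = lam n * dist u v) (hlam : ∀ n, 1 ≤ lam n)
    {δ : ℕ → ℝ} (hδ : Tendsto δ atTop (𝓝 0)) (hEK : ∀ n, f '' E ⊆ thickening (δ n) (g n '' K)) :
    HasAssouadBound E s := by
  obtain ⟨C, hC, hCK⟩ := hKs.exists_coverNum_le hK hs
  set Λ : ℝ := Kf + 1
  have hΛ : 0 < Λ := by positivity
  refine ⟨C * (4 * Λ * (Lf + 1)) ^ s, by positivity, fun z hz r R hr hrR hR1 => ?_⟩
  obtain ⟨n, hn⟩ : ∃ n, δ n < r / (4 * Λ) := (hδ.eventually_lt_const (by positivity)).exists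
  obtain ⟨_, ⟨k₀, hk₀, rfl⟩, hzk₀⟩ := mem_thickening_iff.1 (hEK n ⟨z, hz, rfl⟩)
  have hδn : 0 ≤ δ n := dist_nonneg.trans hzk₀.le
  have hlamn : 0 < lam n := one_pos.trans_le (hlam n)
  have hR : 0 < R := hr.trans_le hrR
  have hδr : 4 * Λ * δ n < r := by rwa [lt_div_iff₀' (by positivity)] at hn
  have hΛ1 : 1 ≤ Λ := le_add_of_nonneg_left Kf.2
  set ρ := r / (4 * Λ) / lam n with hρ
  set R' := (Lf + 1) * R / lam n with hR'
  have hlamρ : lam n * ρ = r / (4 * Λ) := mul_div_cancel₀ _ hlamn.ne'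
  have hρr : r / (4 * Λ) ≤ r := div_le_self hr.le (by linarith)
  have hloc : f '' (E ∩ ball z R) ⊆ thickening (δ n) (g n '' (K ∩ ball k₀ R')) := by
    refine image_inter_ball_subset_thickening hlip (hg n) hlamn.le (hEK n) hzk₀ ?_
    rw [hR', mul_div_cancel₀ _ hlamn.ne']
    nlinarith
  have htransfer : coverNum r (E ∩ ball z R) ≤ coverNum ρ (K ∩ ball k₀ R') := by
    refine coverNum_le_of_image_subset_thickening hanti (fun u v => (hg n u v).le) hlamn.le
      ((hK.exists_finset_subset_iUnion_ball (by positivity)).imp fun _ h =>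
        Set.inter_subset_left.trans h.2) hloc ?_
    have hhalf : 2 * Λ * (r / (4 * Λ)) = r / 2 := by field_simp; ring
    calc 2 * Kf * (lam n * ρ + δ n) ≤ 2 * Λ * (lam n * ρ + δ n) := by
          gcongr
          exact le_add_of_nonneg_right zero_le_one
      _ < r := by rw [hlamρ, mul_add, hhalf]; linarith
  have hρR' : ρ ≤ R' := by
    rw [hρ, hR']
    gcongr
    nlinarith [Lf.2]
  have hρ1 : ρ ≤ 1 := (div_le_self (by positivity) (hlam n)).trans (hρr.trans (hrR.trans hR1))
  calc (coverNum r (E ∩ ball z R) : ℝ) ≤ coverNum ρ (K ∩ ball k₀ R') := by exact_mod_cast htransfer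
    _ ≤ C * (R' / ρ) ^ s := hCK k₀ hk₀ ρ R' (by positivity) hρR' hρ1
    _ = C * (4 * Λ * (Lf + 1)) ^ s * (R / r) ^ s := by
      rw [mul_assoc, ← Real.mul_rpow (by positivity) (by positivity), hρ, hR']
      congr 2
      field_simp

end Microset

theorem stmt10_general (d : ℕ) (K E : Set (EuclideanSpace ℝ (Fin d)))
    (hK : IsCompact K)
    -- `E` is a coarse microset of `K`:
    (f : EuclideanSpace ℝ (Fin d) → EuclideanSpace ℝ (Fin d))
    (L : NNReal) (hlip : LipschitzWith L f) (hanti : AntilipschitzWith L f)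
    (lam : ℕ → ℝ) (hlam : ∀ n, 1 ≤ lam n)
    (x : ℕ → EuclideanSpace ℝ (Fin d))
    (δ : ℕ → ℝ) (hδ : Tendsto δ atTop (nhds 0))
    (happrox : ∀ n, f '' E ⊆ Metric.thickening (δ n) ((fun y => lam n • (y - x n)) '' K)) :
    assouadDim E ≤ assouadDim K := by
  refine assouadDim_le_of_forall_hasAssouadBound (Nat.cast_nonneg _) (hasAssouadBound_finrank K)
    fun s hs hKs =>
      hKs.of_image_subset_thickening hK hs hlip hanti (fun n u v => ?_) hlam hδ happrox
  rw [dist_smul₀, dist_sub_right, Real.norm_of_nonneg (zero_le_one.trans (hlam n))]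

theorem stmt10 (d : ℕ) (K E : Set (EuclideanSpace ℝ (Fin d)))
    (hK : IsCompact K) (hKne : K.Nonempty) (hE : Bornology.IsBounded E)
    -- `E` is a coarse microset of `K`:
    (f : EuclideanSpace ℝ (Fin d) → EuclideanSpace ℝ (Fin d))
    (L : NNReal) (hL : 0 < L) (hlip : LipschitzWith L f) (hanti : AntilipschitzWith L f)
    (lam : ℕ → ℝ) (hlam : ∀ n, 1 ≤ lam n)
    (x : ℕ → EuclideanSpace ℝ (Fin d)) (hx : ∀ n, x n ∈ K)
    (δ : ℕ → ℝ) (hδpos : ∀ n, 0 < δ n) (hδ : Tendsto δ atTop (nhds 0))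
    (happrox : ∀ n, f '' E ⊆ Metric.thickening (δ n) ((fun y => lam n • (y - x n)) '' K)) :
    assouadDim E ≤ assouadDim K :=
  stmt10_general d K E hK f L hlip hanti lam hlam x δ hδ happrox
end
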